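/- (Explicit form.) For every (t,x) ∈ ℕ × ∂B with t ≥ 1 and every function f : ℤ^d → ℝ vanishing outside B, one has N f(x − t e_d) = Σ_{(s,y)∈S(t,x)} c_{t,x}(s,y) f(y + s e_d), where c_{t,x}(s,y) = [∏_{(l,w)∈S(t,x)} P(Z^w_l = w − l e_d)]^{−1} · Σ_{σ∈Sym(S(t,x))} sgn(σ) · P(Z^{σ₂(t,x)}_{σ₁(t,x)} = y + s e_d) · ∏_{(h,z)∈S(t,x)∖{(t,x)}} P(Z^{σ₂(h,z)}_{σ₁(h,z)} = z − h e_d), and where σ(s,y) = (σ₁(s,y), σ₂(s,y)) for a permutation σ of S(t,x). (The denominator ∏_{(l,w)∈S(t,x)} P(Z^w_l = w − l e_d) is strictly positive, so c_{t,x} is well defined.) -/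

import Mathlib

open Finset

/-- The `i`-th standard unit vector `e_i` in `ℤ^(d+1)`. -/
def unitVec (d : ℕ) (i : Fin (d + 1)) : Fin (d + 1) → ℤ := Pi.single i 1

/-- The ℓ¹-norm `‖v‖₁ = ∑ i, |v i|` on `ℤ^(d+1)`. -/
def norm1 {d : ℕ} (v : Fin (d + 1) → ℤ) : ℤ := ∑ i, |v i|

/-- `P t x z` represents the `t`-step transition probability `P(Z^x_t = z)` of a
time-homogeneous Markov chain on `ℤ^(d+1)` which at each step moves by `± e_i`,
with all `2(d+1)` one-step probabilities strictly positive and summing to `1`. -/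
structure IsRandomWalk (d : ℕ)
    (P : ℕ → (Fin (d + 1) → ℤ) → (Fin (d + 1) → ℤ) → ℝ) : Prop where
  nonneg : ∀ t x z, 0 ≤ P t x z
  init : ∀ x z, P 0 x z = if z = x then 1 else 0
  step : ∀ t x z, P (t + 1) x z =
      ∑ i, P 1 x (x + unitVec d i) * P t (x + unitVec d i) z
        + ∑ i, P 1 x (x - unitVec d i) * P t (x - unitVec d i) z
  sum_one : ∀ x, (∑ i, P 1 x (x + unitVec d i)) + (∑ i, P 1 x (x - unitVec d i)) = 1
  pos_add : ∀ x i, 0 < P 1 x (x + unitVec d i)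
  pos_sub : ∀ x i, 0 < P 1 x (x - unitVec d i)

/-- The expectation `E[h(Z^x_t)]` (the law of `Z^x_t` has finite support). -/
noncomputable def expect {d : ℕ} (P : ℕ → (Fin (d + 1) → ℤ) → (Fin (d + 1) → ℤ) → ℝ)
    (t : ℕ) (x : Fin (d + 1) → ℤ) (h : (Fin (d + 1) → ℤ) → ℝ) : ℝ :=
  ∑ᶠ z, h z * P t x z

/-- The finite set `S(t,x) = {(s,y) ∈ ℕ × ∂B : 1 ≤ s ≤ t, ‖y − x‖₁ ≤ t − s,
and t − s − ‖y − x‖₁ is even}`. -/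
noncomputable def Sset (d t : ℕ) (x : Fin (d + 1) → ℤ) : Finset (ℕ × (Fin (d + 1) → ℤ)) :=
  ((Finset.Icc 1 t) ×ˢ (Fintype.piFinset fun i => Finset.Icc (x i - t) (x i + t))).filter
    (fun p => p.2 (Fin.last d) = 0 ∧ norm1 (p.2 - x) ≤ (t : ℤ) - p.1 ∧
      Even ((t : ℤ) - p.1 - norm1 (p.2 - x)))

/-- The matrix `W^+_{t,x}`, with entries `(W^+)_{(s,y),(u,z)} = P(Z^y_s = z + u e_d)`. -/
noncomputable def Wplus {d : ℕ} (P : ℕ → (Fin (d + 1) → ℤ) → (Fin (d + 1) → ℤ) → ℝ)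
    (t : ℕ) (x : Fin (d + 1) → ℤ) :
    Matrix {p // p ∈ Sset d t x} {p // p ∈ Sset d t x} ℝ :=
  fun p q => P p.1.1 p.1.2 (q.1.2 + Pi.single (Fin.last d) (q.1.1 : ℤ))

/-- The matrix `W^-_{t,x}`, with entries `(W^-)_{(s,y),(u,z)} = P(Z^y_s = z - u e_d)`. -/
noncomputable def Wminus {d : ℕ} (P : ℕ → (Fin (d + 1) → ℤ) → (Fin (d + 1) → ℤ) → ℝ)
    (t : ℕ) (x : Fin (d + 1) → ℤ) :
    Matrix {p // p ∈ Sset d t x} {p // p ∈ Sset d t x} ℝ :=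
  fun p q => P p.1.1 p.1.2 (q.1.2 - Pi.single (Fin.last d) (q.1.1 : ℤ))

/-- `N_{t,x} = (W^-_{t,x})⁻¹ W^+_{t,x}`. -/
noncomputable def Nmat {d : ℕ} (P : ℕ → (Fin (d + 1) → ℤ) → (Fin (d + 1) → ℤ) → ℝ)
    (t : ℕ) (x : Fin (d + 1) → ℤ) :
    Matrix {p // p ∈ Sset d t x} {p // p ∈ Sset d t x} ℝ :=
  (Wminus P t x)⁻¹ * Wplus P t x

/-- The extended transform `N f`, vanishing outside `{w : w_d < 0}`, defined at a point
`w = x − t e_d` (with `x ∈ ∂B`, `t ≥ 1`) as the `(t,x)`-component of `N_{t,x}` applied to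
the vector `(f(z + u e_d))_{(u,z) ∈ S(t,x)}`.  (Note that `(t,x) ∈ S(t,x)` always holds
in this situation, so the guard below is satisfied exactly when `w_d < 0`.) -/
noncomputable def Ntrans {d : ℕ} (P : ℕ → (Fin (d + 1) → ℤ) → (Fin (d + 1) → ℤ) → ℝ)
    (f : (Fin (d + 1) → ℤ) → ℝ) : (Fin (d + 1) → ℤ) → ℝ := fun w =>
  if hm : ((-(w (Fin.last d))).toNat, Function.update w (Fin.last d) 0) ∈
      Sset d (-(w (Fin.last d))).toNat (Function.update w (Fin.last d) 0) then
    (Nmat P (-(w (Fin.last d))).toNat (Function.update w (Fin.last d) 0)).mulVec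
      (fun p => f (p.1.2 + Pi.single (Fin.last d) (p.1.1 : ℤ)))
      ⟨((-(w (Fin.last d))).toNat, Function.update w (Fin.last d) 0), hm⟩
  else 0


/-! The matrix `W^-_{t,x}` is triangular: `P(Z^y_s = z - u e_d) ≠ 0` forces
`u + ‖z - y‖₁ ≤ s`, since the walk moves by one unit of `ℓ¹`-distance per step. Hence its
determinant is the product of its diagonal entries, and Cramer's rule applied to
`W^-_{t,x} N_{t,x} = W^+_{t,x}` gives the coefficients `c_{t,x}`. -/

namespace Matrix

variable {ι R : Type*} [Fintype ι] [DecidableEq ι]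

theorem det_eq_prod_diag_of_ne_zero_imp_lt [CommRing R] (M : Matrix ι ι R) (w : ι → ℕ)
    (hM : ∀ i j, M i j ≠ 0 → i = j ∨ w j < w i) : M.det = ∏ i, M i i := by
  rw [det_apply, sum_eq_single 1 ?_ (by simp)]
  · simp
  intro σ _ hσ
  suffices ∃ i, M (σ i) i = 0 by
    obtain ⟨i, hi⟩ := this
    rw [prod_eq_zero (f := fun i => M (σ i) i) (mem_univ i) hi, smul_zero]
  by_contra! hne
  have hle : ∀ i, w i ≤ w (σ i) := fun i =>
    (hM _ _ (hne i)).elim (fun h => (congrArg w h).ge) le_of_lt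
  -- `σ` cannot strictly decrease the weight anywhere, as it preserves the total weight.
  have heq : ∀ i, w i = w (σ i) := fun i =>
    (sum_eq_sum_iff_of_le fun i _ => hle i).1 (Equiv.sum_comp σ w).symm i (mem_univ i)
  exact hσ (Equiv.ext fun i => ((hM _ _ (hne i)).resolve_right (heq i).not_lt))

theorem det_updateCol_eq_sum [CommRing R] (M : Matrix ι ι R) (i : ι) (c : ι → R) :
    (M.updateCol i c).det =
      ∑ σ : Equiv.Perm ι, ((σ.sign : ℤ) : R) * (c (σ i) * ∏ j ∈ univ.erase i, M (σ j) j) := by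
  rw [det_apply]
  refine sum_congr rfl fun σ _ => ?_
  rw [← mul_prod_erase univ _ (mem_univ i), updateCol_self,
    prod_congr rfl fun j hj => updateCol_ne (ne_of_mem_erase hj), Units.smul_def, zsmul_eq_mul]

theorem inv_mul_apply_eq_det_updateCol [Field R] (A B : Matrix ι ι R) (i j : ι) :
    (A⁻¹ * B) i j = A.det⁻¹ * (A.updateCol i fun k => B k j).det := by
  rw [inv_def, Ring.inverse_eq_inv, smul_mul, smul_apply, smul_eq_mul, ← cramer_apply,
    cramer_eq_adjugate_mulVec, mul_apply]
  rfl

end Matrix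

section RandomWalk

variable {d : ℕ}

theorem norm1_nonneg (v : Fin (d + 1) → ℤ) : 0 ≤ norm1 v :=
  sum_nonneg fun _ _ => abs_nonneg _

theorem norm1_eq_zero_iff {v : Fin (d + 1) → ℤ} : norm1 v = 0 ↔ v = 0 := by
  simp [norm1, sum_eq_zero_iff_of_nonneg, funext_iff]

theorem norm1_add_le (a b : Fin (d + 1) → ℤ) : norm1 (a + b) ≤ norm1 a + norm1 b := by
  rw [norm1, norm1, norm1, ← sum_add_distrib]
  exact sum_le_sum fun i _ => abs_add_le _ _

theorem norm1_neg (v : Fin (d + 1) → ℤ) : norm1 (-v) = norm1 v := by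
  simp [norm1]

theorem norm1_unitVec (i : Fin (d + 1)) : norm1 (unitVec d i) = 1 := by
  simp [norm1, unitVec, Pi.single_apply, apply_ite abs]

theorem norm1_sub_single_last {v : Fin (d + 1) → ℤ} (hv : v (Fin.last d) = 0) (u : ℕ) :
    norm1 (v - Pi.single (Fin.last d) (u : ℤ)) = u + norm1 v := by
  have hcoord : ∀ i, |(v - Pi.single (Fin.last d) (u : ℤ) : Fin (d + 1) → ℤ) i| =
      (Pi.single (Fin.last d) (u : ℤ) : Fin (d + 1) → ℤ) i + |v i| := by
    intro i
    rcases eq_or_ne i (Fin.last d) with rfl | h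
    · simp [hv]
    · simp [h]
  simp only [norm1, hcoord, sum_add_distrib, sum_pi_single', mem_univ, if_true]

variable {P : ℕ → (Fin (d + 1) → ℤ) → (Fin (d + 1) → ℤ) → ℝ}

theorem IsRandomWalk.eq_zero_of_lt_norm1 (hP : IsRandomWalk d P) {t : ℕ}
    {x z : Fin (d + 1) → ℤ} (h : (t : ℤ) < norm1 (z - x)) : P t x z = 0 := by
  induction t generalizing x with
  | zero =>
    rw [hP.init, if_neg]
    rintro rfl
    simp [norm1] at h
  | succ t ih =>
    have hnear : ∀ v, norm1 v = 1 → P t (x + v) z = 0 := fun v hv => ih <| by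
      have hsplit : z - (x + v) + v = z - x := by abel
      have := norm1_add_le (z - (x + v)) v
      rw [hsplit, hv] at this
      push_cast at h
      linarith
    rw [hP.step,
      sum_eq_zero fun i _ => by rw [hnear _ (norm1_unitVec i), mul_zero],
      sum_eq_zero fun i _ => by
        rw [sub_eq_add_neg, hnear _ (by rw [norm1_neg, norm1_unitVec]), mul_zero],
      add_zero]

variable {t : ℕ} {x : Fin (d + 1) → ℤ}

theorem Sset_last {p : ℕ × (Fin (d + 1) → ℤ)} (hp : p ∈ Sset d t x) : p.2 (Fin.last d) = 0 :=
  (mem_filter.1 hp).2.1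

theorem IsRandomWalk.le_of_Wminus_ne_zero (hP : IsRandomWalk d P)
    {p q : {p // p ∈ Sset d t x}} (h : Wminus P t x p q ≠ 0) :
    (q.1.1 : ℤ) + norm1 (q.1.2 - p.1.2) ≤ p.1.1 := by
  have hlast : (q.1.2 - p.1.2) (Fin.last d) = 0 := by
    simp [Sset_last q.2, Sset_last p.2]
  rw [← norm1_sub_single_last hlast, sub_right_comm]
  exact not_lt.1 fun hlt => h (hP.eq_zero_of_lt_norm1 hlt)

theorem IsRandomWalk.det_Wminus (hP : IsRandomWalk d P) :
    (Wminus P t x).det =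
      ∏ p : {p // p ∈ Sset d t x}, P p.1.1 p.1.2 (p.1.2 - Pi.single (Fin.last d) (p.1.1 : ℤ)) := by
  refine Matrix.det_eq_prod_diag_of_ne_zero_imp_lt _ (fun p => p.1.1) fun p q h => ?_
  have hle := hP.le_of_Wminus_ne_zero h
  rcases lt_or_eq_of_le (show q.1.1 ≤ p.1.1 by linarith [norm1_nonneg (q.1.2 - p.1.2)]) with
    hlt | hs
  · exact Or.inr hlt
  · have hy : q.1.2 = p.1.2 := sub_eq_zero.1 <| norm1_eq_zero_iff.1 <|
      le_antisymm (by rw [hs] at hle; linarith) (norm1_nonneg _)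
    exact Or.inl (Subtype.ext (Prod.ext hs.symm hy.symm))

theorem IsRandomWalk.Nmat_apply (hP : IsRandomWalk d P) (i q : {p // p ∈ Sset d t x}) :
    Nmat P t x i q =
      (∏ p : {p // p ∈ Sset d t x},
          P p.1.1 p.1.2 (p.1.2 - Pi.single (Fin.last d) (p.1.1 : ℤ)))⁻¹ *
        ∑ σ : Equiv.Perm {p // p ∈ Sset d t x},
          ((Equiv.Perm.sign σ : ℤ) : ℝ) *
            (P (σ i).1.1 (σ i).1.2 (q.1.2 + Pi.single (Fin.last d) (q.1.1 : ℤ)) *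
              ∏ p ∈ univ.erase i,
                P (σ p).1.1 (σ p).1.2 (p.1.2 - Pi.single (Fin.last d) (p.1.1 : ℤ))) := by
  rw [Nmat, Matrix.inv_mul_apply_eq_det_updateCol, hP.det_Wminus,
    Matrix.det_updateCol_eq_sum]
  rfl

theorem Ntrans_sub_single_last (f : (Fin (d + 1) → ℤ) → ℝ) (hx : x (Fin.last d) = 0)
    (hmem : (t, x) ∈ Sset d t x) :
    Ntrans P f (x - Pi.single (Fin.last d) (t : ℤ)) =
      (Nmat P t x).mulVec (fun p => f (p.1.2 + Pi.single (Fin.last d) (p.1.1 : ℤ)))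
        ⟨(t, x), hmem⟩ := by
  set w : Fin (d + 1) → ℤ := x - Pi.single (Fin.last d) (t : ℤ)
  have ht : (-(w (Fin.last d))).toNat = t := by simp [w, hx]
  have hx' : Function.update w (Fin.last d) 0 = x := by
    ext i
    rcases eq_or_ne i (Fin.last d) with rfl | h
    · simp [hx]
    · simp [w, h]
  clear_value w
  subst ht hx'
  exact dif_pos hmem

end RandomWalk

theorem stmt_13_general (d : ℕ) (P : ℕ → (Fin (d + 1) → ℤ) → (Fin (d + 1) → ℤ) → ℝ)
    (hP : IsRandomWalk d P) (t : ℕ)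
    (x : Fin (d + 1) → ℤ) (hx : x (Fin.last d) = 0)
    (hmem : (t, x) ∈ Sset d t x)
    (f : (Fin (d + 1) → ℤ) → ℝ) :
    Ntrans P f (x - Pi.single (Fin.last d) (t : ℤ)) =
      ∑ q : {p // p ∈ Sset d t x},
        ((∏ p : {p // p ∈ Sset d t x},
            P p.1.1 p.1.2 (p.1.2 - Pi.single (Fin.last d) (p.1.1 : ℤ)))⁻¹ *
          ∑ σ : Equiv.Perm {p // p ∈ Sset d t x},
            ((Equiv.Perm.sign σ : ℤ) : ℝ) *
              (P (σ ⟨(t, x), hmem⟩).1.1 (σ ⟨(t, x), hmem⟩).1.2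
                  (q.1.2 + Pi.single (Fin.last d) (q.1.1 : ℤ)) *
                ∏ p ∈ Finset.univ.erase (⟨(t, x), hmem⟩ : {p // p ∈ Sset d t x}),
                  P (σ p).1.1 (σ p).1.2
                    (p.1.2 - Pi.single (Fin.last d) (p.1.1 : ℤ)))) *
          f (q.1.2 + Pi.single (Fin.last d) (q.1.1 : ℤ)) := by
  simp only [Ntrans_sub_single_last f hx hmem, Matrix.mulVec, dotProduct, hP.Nmat_apply]

/-- Explicit form: `N f(x − t e_d) = ∑_{(s,y) ∈ S(t,x)} c_{t,x}(s,y) f(y + s e_d)`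
with the explicit coefficients `c_{t,x}(s,y)` given by Cramer's rule. -/
theorem stmt_13 (d : ℕ) (P : ℕ → (Fin (d + 1) → ℤ) → (Fin (d + 1) → ℤ) → ℝ)
    (hP : IsRandomWalk d P) (t : ℕ) (ht : 1 ≤ t)
    (x : Fin (d + 1) → ℤ) (hx : x (Fin.last d) = 0)
    (hmem : (t, x) ∈ Sset d t x)
    (f : (Fin (d + 1) → ℤ) → ℝ) (hf : ∀ z, z (Fin.last d) ≤ 0 → f z = 0) :
    Ntrans P f (x - Pi.single (Fin.last d) (t : ℤ)) =
      ∑ q : {p // p ∈ Sset d t x},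
        ((∏ p : {p // p ∈ Sset d t x},
            P p.1.1 p.1.2 (p.1.2 - Pi.single (Fin.last d) (p.1.1 : ℤ)))⁻¹ *
          ∑ σ : Equiv.Perm {p // p ∈ Sset d t x},
            ((Equiv.Perm.sign σ : ℤ) : ℝ) *
              (P (σ ⟨(t, x), hmem⟩).1.1 (σ ⟨(t, x), hmem⟩).1.2
                  (q.1.2 + Pi.single (Fin.last d) (q.1.1 : ℤ)) *
                ∏ p ∈ Finset.univ.erase (⟨(t, x), hmem⟩ : {p // p ∈ Sset d t x}),
                  P (σ p).1.1 (σ p).1.2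
                    (p.1.2 - Pi.single (Fin.last d) (p.1.1 : ℤ)))) *
          f (q.1.2 + Pi.single (Fin.last d) (q.1.1 : ℤ)) :=
  stmt_13_general d P hP t x hx hmem f
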